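/- Let Ω ⊆ ℝᵈ be open and u : Ω → [-∞, ∞) subharmonic. Then for every a ∈ Ω, lim_{r→0⁺} esssup_{B(a,r)} u = u(a); in other words, every subharmonic function is weakly upper semi-continuous (u⋆ = u). -/

import Mathlib

open MeasureTheory Metric Filter
open scoped ENNReal NNReal

noncomputable instance {n : ℕ} : MeasureSpace (EuclideanSpace ℂ (Fin n)) where
  volume := (volume : Measure (Fin n → ℂ)).map (MeasurableEquiv.toLp 2 (Fin n → ℂ))

/-- `EReal → ℝ≥0∞`, clipping negative values to `0`. -/
noncomputable def erealToENNReal (x : EReal) : ℝ≥0∞ :=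
  if x = ⊤ then ⊤ else ENNReal.ofReal x.toReal

/-- The truncated ball mean `(⨍_{B(a,r)} max (u x) (-n) dμ)` of an `EReal`-valued function,
encoded via `lintegral` of the nonnegative shift `max u (-n) + n`, then shifted back by `-n`. -/
noncomputable def truncMean {E : Type*} [MeasurableSpace E] [PseudoMetricSpace E]
    (μ : Measure E) (u : E → EReal) (a : E) (r : ℝ) (k : ℕ) : EReal :=
  (((∫⁻ x in ball a r, erealToENNReal ((u x ⊔ ((-(k : ℝ) : ℝ) : EReal)) + ((k : ℝ) : EReal)) ∂μ)
      / μ (ball a r) : ℝ≥0∞) : EReal) + ((-(k : ℝ) : ℝ) : EReal)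

/-- Sub-mean value property on `Ω`: on every closed ball contained in `Ω`, `u` is dominated
by its ball means (expressed through decreasing truncated means). -/
def SubMeanOn {E : Type*} [MeasurableSpace E] [PseudoMetricSpace E]
    (μ : Measure E) (u : E → EReal) (Ω : Set E) : Prop :=
  ∀ a ∈ Ω, ∀ r : ℝ, 0 < r → closedBall a r ⊆ Ω → u a ≤ ⨅ k : ℕ, truncMean μ u a r k

/-- Subharmonicity: upper semicontinuity plus the sub-mean value property. -/
def SubharmonicOn {E : Type*} [MeasurableSpace E] [PseudoMetricSpace E]
    (μ : Measure E) (u : E → EReal) (Ω : Set E) : Prop :=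
  UpperSemicontinuousOn u Ω ∧ SubMeanOn μ u Ω

/-- Plurisubharmonicity on `Ω ⊆ ℂⁿ`: upper semicontinuity plus subharmonicity along every
complex line. -/
def PlurisubharmonicOn {n : ℕ} (u : EuclideanSpace ℂ (Fin n) → EReal)
    (Ω : Set (EuclideanSpace ℂ (Fin n))) : Prop :=
  UpperSemicontinuousOn u Ω ∧
    ∀ a b : EuclideanSpace ℂ (Fin n),
      SubMeanOn volume (fun z : ℂ => u (a + z • b)) {z : ℂ | a + z • b ∈ Ω}

/-- `exp : EReal → ℝ≥0∞` (this is `EReal.exp`). -/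
noncomputable def expE (x : EReal) : ℝ≥0∞ := x.exp

/-- The weight `e^{-2mV}` as an `ℝ≥0∞`-valued function. -/
noncomputable def weight {n : ℕ} (m : ℝ) (V : EuclideanSpace ℂ (Fin n) → EReal)
    (z : EuclideanSpace ℂ (Fin n)) : ℝ≥0∞ :=
  expE (-(((2 * m : ℝ) : EReal) * V z))

/-- The weighted Bergman kernel on the diagonal for the weight `e^{-2mV}` on `Ω`. -/
noncomputable def bergmanK {n : ℕ} (Ω : Set (EuclideanSpace ℂ (Fin n))) (m : ℝ)
    (V : EuclideanSpace ℂ (Fin n) → EReal) (z : EuclideanSpace ℂ (Fin n)) : ℝ≥0∞ :=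
  ⨆ (f : EuclideanSpace ℂ (Fin n) → ℂ) (_ : DifferentiableOn ℂ f Ω)
    (_ : ∫⁻ w in Ω, (‖f w‖₊ : ℝ≥0∞) ^ 2 * weight m V w ≤ 1), (‖f z‖₊ : ℝ≥0∞) ^ 2

/-- Demailly's approximation `V_m = (1/(2m)) log K_{mV}`. -/
noncomputable def demailly {n : ℕ} (Ω : Set (EuclideanSpace ℂ (Fin n)))
    (V : EuclideanSpace ℂ (Fin n) → EReal) (m : ℝ) (z : EuclideanSpace ℂ (Fin n)) : EReal :=
  (((1 / (2 * m) : ℝ)) : EReal) * ENNReal.log (bergmanK Ω m V z)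

/-- Local boundedness from above on `Ω`. -/
def LocBddAbove {E : Type*} [PseudoMetricSpace E] (V : E → EReal) (Ω : Set E) : Prop :=
  ∀ a ∈ Ω, ∃ r > 0, ∃ M : ℝ, ∀ z ∈ ball a r ∩ Ω, V z ≤ (M : ℝ)

/-- The weakly upper semicontinuous regularization
`V⋆(a) = lim_{r→0⁺} esssup_{B(a,r)∩Ω} V = inf_{r>0} esssup_{B(a,r)∩Ω} V`. -/
noncomputable def wuscReg {E : Type*} [MeasurableSpace E] [PseudoMetricSpace E]
    (μ : Measure E) (Ω : Set E) (V : E → EReal) (a : E) : EReal :=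
  ⨅ (r : ℝ) (_ : 0 < r), essSup V (μ.restrict (ball a r ∩ Ω))

/-- `V` is weakly upper semicontinuous on `Ω` when `V⋆ = V` there. -/
def WeaklyUSCOn {E : Type*} [MeasurableSpace E] [PseudoMetricSpace E]
    (μ : Measure E) (Ω : Set E) (V : E → EReal) : Prop :=
  ∀ a ∈ Ω, wuscReg μ Ω V a = V a

/-- The plurisubharmonic envelope `Ṽ = sup {ψ psh on Ω : ψ ≤ V on Ω}`. -/
noncomputable def pshEnvelope {n : ℕ} (Ω : Set (EuclideanSpace ℂ (Fin n)))
    (V : EuclideanSpace ℂ (Fin n) → EReal) (z : EuclideanSpace ℂ (Fin n)) : EReal :=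
  ⨆ (ψ : EuclideanSpace ℂ (Fin n) → EReal) (_ : PlurisubharmonicOn ψ Ω)
    (_ : ∀ w ∈ Ω, ψ w ≤ V w), ψ z

/-- Pseudoconvexity: `-log dist(·, ∂Ω)` is plurisubharmonic on `Ω`. -/
def Pseudoconvex {n : ℕ} (Ω : Set (EuclideanSpace ℂ (Fin n))) : Prop :=
  IsOpen Ω ∧
    PlurisubharmonicOn (fun z => ((-Real.log (infDist z Ωᶜ) : ℝ) : EReal)) Ω

lemma erealToENNReal_mono {x y : EReal} (h : x ≤ y) : erealToENNReal x ≤ erealToENNReal y := by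
  unfold erealToENNReal
  rcases eq_or_ne y ⊤ with hy | hy
  · simp [hy]
  · have hx : x ≠ ⊤ := fun hx => hy (top_le_iff.mp (hx ▸ h))
    simp only [hx, hy, if_false]
    rcases eq_or_ne x ⊥ with hxb | hxb
    · simp [hxb]
    · rcases eq_or_ne y ⊥ with hyb | hyb
      · rw [hyb, le_bot_iff] at h; exact absurd h hxb
      · exact ENNReal.ofReal_le_ofReal (EReal.toReal_le_toReal h hxb hy)

lemma key_eq (x : EReal) (k : ℕ) :
    ((erealToENNReal ((x ⊔ ((-(k : ℝ) : ℝ) : EReal)) + ((k : ℝ) : EReal)) : ℝ≥0∞) : EReal)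
      + ((-(k : ℝ) : ℝ) : EReal) = x ⊔ ((-(k : ℝ) : ℝ) : EReal) := by
  have hTb : ((-(k : ℝ) : ℝ) : EReal) ≤ x ⊔ ((-(k : ℝ) : ℝ) : EReal) := le_sup_right
  generalize hT : x ⊔ ((-(k : ℝ) : ℝ) : EReal) = T at hTb ⊢
  induction T using EReal.rec with
  | bot => exact absurd (le_bot_iff.mp hTb) (EReal.coe_ne_bot _)
  | top =>
      rw [EReal.top_add_coe]
      simp [erealToENNReal, EReal.coe_ennreal_top, EReal.top_add_coe]
      exact EReal.top_add_of_ne_bot (by simpa using EReal.natCast_ne_top k)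
  | coe t =>
      have ht : -(k : ℝ) ≤ t := EReal.coe_le_coe_iff.mp hTb
      have h1 : ((t : EReal) + ((k : ℝ) : EReal)) = ((t + k : ℝ) : EReal) := by norm_cast
      rw [h1]
      have h2 : erealToENNReal ((t + k : ℝ) : EReal) = ENNReal.ofReal (t + k) := by
        rw [erealToENNReal, if_neg (EReal.coe_ne_top _), EReal.toReal_coe]
      rw [h2, EReal.coe_ennreal_ofReal]
      have h3 : (t + k) ⊔ 0 = t + k := sup_eq_left.mpr (by linarith)
      rw [h3]
      have : ((t + (k:ℝ) : ℝ) : EReal) + ((-(k : ℝ) : ℝ) : EReal) = ((t + k + -k : ℝ) : EReal) := by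
        norm_cast
      rw [this]
      norm_num

lemma le_neg_nat_bot {x : EReal} (h : ∀ k : ℕ, x ≤ ((-(k : ℝ) : ℝ) : EReal)) : x = ⊥ := by
  induction x using EReal.rec with
  | bot => rfl
  | coe y =>
      exfalso
      obtain ⟨k, hk⟩ := exists_nat_gt (-y)
      have := EReal.coe_le_coe_iff.mp (h k)
      linarith
  | top => exfalso; have := h 0; simp at this

lemma iInf_sup_neg_le (S : EReal) : ⨅ k : ℕ, (S ⊔ ((-(k : ℝ) : ℝ) : EReal)) ≤ S := by
  induction S using EReal.rec with
  | bot =>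
      exact (le_neg_nat_bot fun k => (iInf_le _ k).trans (bot_sup_eq _).le).le
  | top => exact le_top
  | coe s =>
      obtain ⟨k, hk⟩ := exists_nat_ge (-s)
      refine (iInf_le _ k).trans ?_
      apply sup_le le_rfl
      exact EReal.coe_le_coe_iff.mpr (by linarith)

lemma truncMean_le {E : Type*} [MeasurableSpace E] [PseudoMetricSpace E]
    (μ : Measure E) (u : E → EReal) (a : E) (r : ℝ)
    (h0 : μ (ball a r) ≠ 0) (ht : μ (ball a r) ≠ ⊤) (k : ℕ) :
    truncMean μ u a r k ≤ essSup u (μ.restrict (ball a r)) ⊔ ((-(k : ℝ) : ℝ) : EReal) := by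
  set S := essSup u (μ.restrict (ball a r)) with hS
  set c : ℝ≥0∞ := erealToENNReal ((S ⊔ ((-(k : ℝ) : ℝ) : EReal)) + ((k : ℝ) : EReal)) with hc
  have hae : ∀ᵐ x ∂μ.restrict (ball a r), u x ≤ S := ae_le_essSup
  have hint : (∫⁻ x in ball a r,
      erealToENNReal ((u x ⊔ ((-(k : ℝ) : ℝ) : EReal)) + ((k : ℝ) : EReal)) ∂μ) ≤ c * μ (ball a r) := by
    calc (∫⁻ x in ball a r,
        erealToENNReal ((u x ⊔ ((-(k : ℝ) : ℝ) : EReal)) + ((k : ℝ) : EReal)) ∂μ)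
        ≤ ∫⁻ _ in ball a r, c ∂μ := by
          refine lintegral_mono_ae (hae.mono fun x hx => ?_)
          exact erealToENNReal_mono (add_le_add_left (sup_le_sup_right hx _) _)
      _ = c * μ (ball a r) := by
          rw [lintegral_const, Measure.restrict_apply_univ]
  have hdiv : (∫⁻ x in ball a r,
      erealToENNReal ((u x ⊔ ((-(k : ℝ) : ℝ) : EReal)) + ((k : ℝ) : EReal)) ∂μ) / μ (ball a r) ≤ c :=
    (ENNReal.div_le_iff_le_mul (Or.inl h0) (Or.inl ht)).mpr hint
  calc truncMean μ u a r k
      ≤ ((c : ℝ≥0∞) : EReal) + ((-(k : ℝ) : ℝ) : EReal) := by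
        exact add_le_add_left (EReal.coe_ennreal_le_coe_ennreal_iff.mpr hdiv) _
    _ = S ⊔ ((-(k : ℝ) : ℝ) : EReal) := key_eq S k

/-- every subharmonic function is weakly usc. -/
theorem stmt_12 {d : ℕ} (Ω : Set (EuclideanSpace ℝ (Fin d))) (hΩo : IsOpen Ω)
    (u : EuclideanSpace ℝ (Fin d) → EReal) (hu : SubharmonicOn volume u Ω)
    (hune : ∀ z ∈ Ω, u z ≠ ⊤) :
    ∀ a ∈ Ω, wuscReg volume Ω u a = u a := by
  intro a ha
  apply le_antisymm
  · -- wuscReg ≤ u a, from upper semicontinuity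
    refine le_of_forall_gt_imp_ge_of_dense fun c hc => ?_
    have h := hu.1 a ha c hc
    obtain ⟨ε, hε, hsub⟩ := Metric.mem_nhdsWithin_iff.mp h
    refine (iInf_le _ ε).trans ((iInf_le _ hε).trans ?_)
    have hmeas : MeasurableSet (ball a ε ∩ Ω) := (isOpen_ball.inter hΩo).measurableSet
    exact essSup_le_of_ae_le c ((ae_restrict_iff' hmeas).mpr (ae_of_all _ fun x hx => (hsub hx).le))
  · -- u a ≤ wuscReg, from the sub-mean value property
    refine le_iInf fun r => le_iInf fun hr => ?_
    obtain ⟨ε, hε, hballΩ⟩ := Metric.isOpen_iff.mp hΩo a ha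
    set r' : ℝ := min (ε / 2) r with hr'def
    have hr' : 0 < r' := lt_min (half_pos hε) hr
    have hcb : closedBall a r' ⊆ Ω :=
      (closedBall_subset_ball ((min_le_left _ _).trans_lt (half_lt_self hε))).trans hballΩ
    have hballsub : ball a r' ⊆ Ω := ball_subset_closedBall.trans hcb
    have heq : ball a r' ∩ Ω = ball a r' := Set.inter_eq_left.mpr hballsub
    have h0 : volume (ball a r') ≠ 0 := (measure_ball_pos _ _ hr').ne'
    have htop : volume (ball a r') ≠ ⊤ := measure_ball_lt_top.ne
    have h1 : u a ≤ ⨅ k : ℕ, truncMean volume u a r' k := hu.2 a ha r' hr' hcb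
    have h2 : (⨅ k : ℕ, truncMean volume u a r' k)
        ≤ essSup u (volume.restrict (ball a r')) :=
      le_trans (iInf_mono fun k => truncMean_le _ _ _ _ h0 htop k) (iInf_sup_neg_le _)
    have h4 : essSup u (volume.restrict (ball a r' ∩ Ω))
        ≤ essSup u (volume.restrict (ball a r ∩ Ω)) :=
      essSup_mono_measure (Measure.absolutelyContinuous_of_le
        (Measure.restrict_mono
          (Set.inter_subset_inter (ball_subset_ball (min_le_right _ _)) Set.Subset.rfl) le_rfl))
    rw [heq] at h4
    exact h1.trans (h2.trans h4)
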